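/- arXiv:0710.2266 — 4 statements merged into one kernel-verified Lean document; each statement's English description precedes it below -/
import Mathlib

section
/- If J₊ and J₋ are two almost complex structures on a 4-dimensional real vector space V compatible with an inner product g and inducing the same orientation, then J₊J₋ + J₋J₊ = -2p·Id, where p = -(1/4)·trace(J₊J₋). -/
/-!
In a positively oriented orthonormal basis `(e, J₊e, f, J₊f)` the structure `J₊` has the standard
matrix `J₀`, and `J₋` has matrix `A = Q J₀ Qᵀ` with `Q` special orthogonal. So `A` is skew with
`A² = -1` and Pfaffian `det Q = 1`. Writing `a, …, f` for the entries of `A` above the diagonal,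
`A² = -1` gives `a² + ⋯ + f² = 2` and the Pfaffian is `af - be + cd`, so the anti-self-dual part
`(a - f, b + e, c - d)` of `A` has squared norm `2 - 2 · 1 = 0`. A self-dual `A` is `-a J₀` plus a
combination of two complex structures anticommuting with `J₀`, hence `J₀ A + A J₀` is a scalar.
-/

open scoped RealInnerProductSpace

/-- A `g`-compatible complex structure `J` on an oriented `4`-dimensional real inner
product space `V` *induces the orientation* `o` if there is a positively oriented
orthonormal basis of the form `(e, Je, f, Jf)`.  (This is the standard description of
the orientation induced by the volume form of the fundamental `2`-form
`F(·,·) = g(J·,·)`.) -/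
def InducesOrientation {V : Type*} [NormedAddCommGroup V] [InnerProductSpace ℝ V]
    (o : Orientation ℝ V (Fin 4)) (J : V →ₗ[ℝ] V) : Prop :=
  ∃ b : OrthonormalBasis (Fin 4) ℝ V,
    b.toBasis.orientation = o ∧ J (b 0) = b 1 ∧ J (b 2) = b 3

open scoped Matrix

def stdComplexStructure (R : Type*) [Ring R] : Matrix (Fin 4) (Fin 4) R :=
  !![0, -1, 0, 0; 1, 0, 0, 0; 0, 0, 0, -1; 0, 0, 1, 0]

def pfaffian4 {R : Type*} [CommRing R] (A : Matrix (Fin 4) (Fin 4) R) : R :=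
  A 0 1 * A 2 3 - A 0 2 * A 1 3 + A 0 3 * A 1 2

theorem stdComplexStructure_transpose (R : Type*) [Ring R] :
    (stdComplexStructure R)ᵀ = -stdComplexStructure R := by
  simp [stdComplexStructure, ← Matrix.ext_iff, Fin.forall_fin_succ]

theorem stdComplexStructure_mul_self (R : Type*) [Ring R] :
    stdComplexStructure R * stdComplexStructure R = -1 := by
  simp [stdComplexStructure, ← Matrix.ext_iff, Fin.forall_fin_succ]

theorem pfaffian4_conj_stdComplexStructure {R : Type*} [CommRing R]
    (Q : Matrix (Fin 4) (Fin 4) R) :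
    pfaffian4 (Q * stdComplexStructure R * Qᵀ) = Q.det := by
  simp [pfaffian4, stdComplexStructure, Matrix.det_succ_row_zero, Fin.sum_univ_succ,
    Matrix.mul_apply, Fin.succAbove]
  ring

theorem Matrix.eta_fin_four_of_transpose_eq_neg {R : Type*} [CommRing R] [NoZeroDivisors R]
    [CharZero R] {A : Matrix (Fin 4) (Fin 4) R} (hA : Aᵀ = -A) :
    A = !![0, A 0 1, A 0 2, A 0 3; -A 0 1, 0, A 1 2, A 1 3; -A 0 2, -A 1 2, 0, A 2 3;
      -A 0 3, -A 1 3, -A 2 3, 0] := by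
  have hA' : ∀ i j, A j i = -A i j := fun i j => by simpa using congrFun₂ hA i j
  have hdiag : ∀ i, A i i = 0 := fun i => CharZero.eq_neg_self_iff.mp (hA' i i)
  ext i j
  fin_cases i <;> fin_cases j <;>
    simp [hdiag, hA' 0 1, hA' 0 2, hA' 0 3, hA' 1 2, hA' 1 3, hA' 2 3]

theorem anticomm_stdComplexStructure_of_pfaffian4_eq_one {R : Type*} [Field R] [LinearOrder R]
    [IsStrictOrderedRing R] {A : Matrix (Fin 4) (Fin 4) R} (hskew : Aᵀ = -A) (hsq : A * A = -1)
    (hpf : pfaffian4 A = 1) :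
    stdComplexStructure R * A + A * stdComplexStructure R =
      ((stdComplexStructure R * A).trace / 2) • 1 := by
  rw [pfaffian4] at hpf
  rw [Matrix.eta_fin_four_of_transpose_eq_neg hskew] at hsq ⊢
  generalize A 0 1 = a, A 0 2 = b, A 0 3 = c, A 1 2 = d, A 1 3 = e, A 2 3 = f at hsq hpf ⊢
  have hnorm : a ^ 2 + b ^ 2 + c ^ 2 + d ^ 2 + e ^ 2 + f ^ 2 = 2 := by
    have htr := congrArg Matrix.trace hsq
    simp [Matrix.trace, Fin.sum_univ_four] at htr
    linarith
  have hasd : (a - f) ^ 2 + (b + e) ^ 2 + (c - d) ^ 2 = 0 := by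
    linear_combination hnorm - 2 * hpf
  obtain ⟨haf, hbe, hcd⟩ : a = f ∧ b = -e ∧ c = d := by
    refine ⟨?_, ?_, ?_⟩ <;> nlinarith [sq_nonneg (a - f), sq_nonneg (b + e), sq_nonneg (c - d)]
  subst haf hbe hcd
  simp [stdComplexStructure, ← Matrix.ext_iff, Fin.forall_fin_succ, Matrix.trace, Fin.sum_univ_four]
  ring

theorem anticomm_stdComplexStructure_conj {R : Type*} [Field R] [LinearOrder R]
    [IsStrictOrderedRing R] {Q : Matrix (Fin 4) (Fin 4) R} (hQ : Qᵀ * Q = 1) (hdet : Q.det = 1) :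
    stdComplexStructure R * (Q * stdComplexStructure R * Qᵀ) +
        Q * stdComplexStructure R * Qᵀ * stdComplexStructure R =
      ((stdComplexStructure R * (Q * stdComplexStructure R * Qᵀ)).trace / 2) • 1 := by
  have hQ' : Q * Qᵀ = 1 := mul_eq_one_comm.mp hQ
  apply anticomm_stdComplexStructure_of_pfaffian4_eq_one
  · simp [Matrix.transpose_mul, stdComplexStructure_transpose, Matrix.mul_assoc]
  · calc Q * stdComplexStructure R * Qᵀ * (Q * stdComplexStructure R * Qᵀ)
        = Q * stdComplexStructure R * (Qᵀ * Q) * stdComplexStructure R * Qᵀ := by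
          simp only [Matrix.mul_assoc]
      _ = -1 := by
          rw [hQ, Matrix.mul_one, Matrix.mul_assoc Q, stdComplexStructure_mul_self]
          simp [hQ']
  · rw [pfaffian4_conj_stdComplexStructure, hdet]

theorem LinearMap.toMatrix_eq_stdComplexStructure {R M : Type*} [CommRing R] [AddCommGroup M]
    [Module R M] (b : Module.Basis (Fin 4) R M) {J : M →ₗ[R] M} (hJ : J ∘ₗ J = -LinearMap.id)
    (h0 : J (b 0) = b 1) (h2 : J (b 2) = b 3) :
    LinearMap.toMatrix b b J = stdComplexStructure R := by
  have h1 : J (b 1) = -b 0 := by rw [← h0, ← LinearMap.comp_apply, hJ]; rfl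
  have h3 : J (b 3) = -b 2 := by rw [← h2, ← LinearMap.comp_apply, hJ]; rfl
  ext i j
  fin_cases i <;> fin_cases j <;>
    simp [LinearMap.toMatrix_apply, stdComplexStructure, h0, h1, h2, h3]

theorem OrthonormalBasis.toMatrix_toBasis_flip {ι E : Type*} [Fintype ι] [DecidableEq ι]
    [NormedAddCommGroup E] [InnerProductSpace ℝ E] (e f : OrthonormalBasis ι ℝ E) :
    f.toBasis.toMatrix e = (e.toBasis.toMatrix f)ᵀ := by
  ext i j
  simp [Module.Basis.toMatrix_apply, OrthonormalBasis.repr_apply_apply, real_inner_comm]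

theorem OrthonormalBasis.toMatrix_eq_conj {ι E : Type*} [Fintype ι] [DecidableEq ι]
    [NormedAddCommGroup E] [InnerProductSpace ℝ E] (e f : OrthonormalBasis ι ℝ E) (T : E →ₗ[ℝ] E) :
    LinearMap.toMatrix e.toBasis e.toBasis T =
      e.toBasis.toMatrix f * LinearMap.toMatrix f.toBasis f.toBasis T * (e.toBasis.toMatrix f)ᵀ := by
  rw [← e.toMatrix_toBasis_flip]
  exact (basis_toMatrix_mul_linearMap_toMatrix_mul_basis_toMatrix e.toBasis f.toBasis e.toBasis
    f.toBasis T).symm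

theorem stmt0_general {V : Type*} [NormedAddCommGroup V] [InnerProductSpace ℝ V]
    (o : Orientation ℝ V (Fin 4))
    (Jp Jm : V →ₗ[ℝ] V)
    (hJpsq : Jp ∘ₗ Jp = -LinearMap.id) (hJmsq : Jm ∘ₗ Jm = -LinearMap.id)
    (hJpo : InducesOrientation o Jp) (hJmo : InducesOrientation o Jm)
    (p : ℝ) (hp : p = -(1/4) * LinearMap.trace ℝ V (Jp ∘ₗ Jm)) :
    Jp ∘ₗ Jm + Jm ∘ₗ Jp = (-(2 * p)) • (LinearMap.id : V →ₗ[ℝ] V) := by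
  obtain ⟨bp, hbp, hJp0, hJp2⟩ := hJpo
  obtain ⟨bm, hbm, hJm0, hJm2⟩ := hJmo
  set Q := bp.toBasis.toMatrix bm
  have hQ : Qᵀ * Q = 1 := by simpa using bp.toMatrix_orthonormalBasis_conjTranspose_mul_self bm
  have hdet : Q.det = 1 := by
    rw [← Module.Basis.det_apply]
    exact bp.det_to_matrix_orthonormalBasis_of_same_orientation bm (hbp.trans hbm.symm)
  have hMp : LinearMap.toMatrix bp.toBasis bp.toBasis Jp = stdComplexStructure ℝ :=
    LinearMap.toMatrix_eq_stdComplexStructure bp.toBasis hJpsq (by simpa) (by simpa)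
  have hMm : LinearMap.toMatrix bp.toBasis bp.toBasis Jm = Q * stdComplexStructure ℝ * Qᵀ := by
    rw [bp.toMatrix_eq_conj bm,
      LinearMap.toMatrix_eq_stdComplexStructure bm.toBasis hJmsq (by simpa) (by simpa)]
  apply (LinearMap.toMatrix bp.toBasis bp.toBasis).injective
  have hcomp := LinearMap.toMatrix_comp bp.toBasis bp.toBasis bp.toBasis
  rw [map_add, hcomp, hcomp, hMp, hMm, anticomm_stdComplexStructure_conj hQ hdet, _root_.map_smul,
    LinearMap.toMatrix_id, hp, LinearMap.trace_eq_matrix_trace ℝ bp.toBasis, hcomp, hMp, hMm]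
  congr 1
  ring

/-- If `Jp` and `Jm` are two almost complex structures on a `4`-dimensional real vector
space `V`, compatible with an inner product `g` and inducing the same orientation, then
`JpJm + JmJp = -2p·Id` where `p = -(1/4)·trace (JpJm)`. -/
theorem stmt0 {V : Type*} [NormedAddCommGroup V] [InnerProductSpace ℝ V]
    (hdim : Module.finrank ℝ V = 4) (o : Orientation ℝ V (Fin 4))
    (Jp Jm : V →ₗ[ℝ] V)
    (hJpsq : Jp ∘ₗ Jp = -LinearMap.id) (hJmsq : Jm ∘ₗ Jm = -LinearMap.id)
    (hJpg : ∀ x y : V, ⟪Jp x, Jp y⟫ = ⟪x, y⟫)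
    (hJmg : ∀ x y : V, ⟪Jm x, Jm y⟫ = ⟪x, y⟫)
    (hJpo : InducesOrientation o Jp) (hJmo : InducesOrientation o Jm)
    (p : ℝ) (hp : p = -(1/4) * LinearMap.trace ℝ V (Jp ∘ₗ Jm)) :
    Jp ∘ₗ Jm + Jm ∘ₗ Jp = (-(2 * p)) • (LinearMap.id : V →ₗ[ℝ] V) :=
  stmt0_general o Jp Jm hJpsq hJmsq hJpo hJmo p hp
end

section
/- Let J₊, J₋ be g-orthogonal complex structures on a 4-dimensional oriented inner product space inducing the given orientation, with angle function p = -(1/4)trace(J₊J₋). Then |p| ≤ 1, and p = 1 iff J₊ = J₋, and p = -1 iff J₊ = -J₋. -/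
open scoped RealInnerProductSpace

section Contraction

variable {V : Type*} [NormedAddCommGroup V] [InnerProductSpace ℝ V] {Q : V →ₗ[ℝ] V}

theorem abs_inner_map_self_le_one_of_norm_map_le (hQ : ∀ x, ‖Q x‖ ≤ ‖x‖) {x : V}
    (hx : ‖x‖ = 1) : |⟪x, Q x⟫| ≤ 1 :=
  calc |⟪x, Q x⟫| ≤ ‖x‖ * ‖Q x‖ := abs_real_inner_le_norm _ _
    _ ≤ 1 := by nlinarith [hQ x, norm_nonneg (Q x)]

theorem map_eq_self_of_inner_map_self_eq_one (hQ : ∀ x, ‖Q x‖ ≤ ‖x‖) {x : V}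
    (hx : ‖x‖ = 1) (hQx : ⟪x, Q x⟫ = 1) : Q x = x := by
  have hnorm : ‖Q x‖ = 1 :=
    le_antisymm (hx ▸ hQ x) (by simpa [hx, hQx] using real_inner_le_norm x (Q x))
  exact ((inner_eq_one_iff_of_norm_eq_one hx hnorm).mp hQx).symm

variable [FiniteDimensional ℝ V]

theorem LinearMap.abs_trace_le_finrank_of_norm_map_le (hQ : ∀ x, ‖Q x‖ ≤ ‖x‖) :
    |LinearMap.trace ℝ V Q| ≤ Module.finrank ℝ V := by
  let b := stdOrthonormalBasis ℝ V
  rw [LinearMap.trace_eq_sum_inner Q b]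
  calc |∑ i, ⟪b i, Q (b i)⟫| ≤ ∑ i, |⟪b i, Q (b i)⟫| := Finset.abs_sum_le_sum_abs _ _
    _ ≤ ∑ _i, (1 : ℝ) := Finset.sum_le_sum fun i _ =>
        abs_inner_map_self_le_one_of_norm_map_le hQ (b.norm_eq_one i)
    _ = Module.finrank ℝ V := by simp

theorem LinearMap.trace_eq_finrank_iff_of_norm_map_le (hQ : ∀ x, ‖Q x‖ ≤ ‖x‖) :
    LinearMap.trace ℝ V Q = Module.finrank ℝ V ↔ Q = LinearMap.id := by
  refine ⟨fun htr => ?_, fun h => h ▸ LinearMap.trace_id ℝ V⟩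
  let b := stdOrthonormalBasis ℝ V
  have hdefect : ∀ i ∈ Finset.univ, 0 ≤ 1 - ⟪b i, Q (b i)⟫ := fun i _ =>
    sub_nonneg.mpr (le_of_abs_le (abs_inner_map_self_le_one_of_norm_map_le hQ (b.norm_eq_one i)))
  have hsum : ∑ i, (1 - ⟪b i, Q (b i)⟫) = 0 := by
    simp [Finset.sum_sub_distrib, ← LinearMap.trace_eq_sum_inner Q b, htr]
  have hfix (i) : Q (b i) = b i :=
    map_eq_self_of_inner_map_self_eq_one hQ (b.norm_eq_one i)
      (sub_eq_zero.mp ((Finset.sum_eq_zero_iff_of_nonneg hdefect).mp hsum i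
        (Finset.mem_univ i))).symm
  exact b.toBasis.ext fun i => by simpa using hfix i

end Contraction

theorem LinearMap.comp_eq_neg_id_iff_eq {R M : Type*} [Semiring R] [AddCommGroup M]
    [Module R M] {J K : M →ₗ[R] M} (hJ : J ∘ₗ J = -LinearMap.id) :
    J ∘ₗ K = -LinearMap.id ↔ J = K := by
  constructor
  · intro h
    calc J = -((J ∘ₗ J) ∘ₗ K) := by rw [LinearMap.comp_assoc, h]; simp
      _ = K := by simp [hJ]
  · rintro rfl; exact hJ

theorem LinearMap.comp_eq_id_iff_eq_neg {R M : Type*} [Semiring R] [AddCommGroup M]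
    [Module R M] {J K : M →ₗ[R] M} (hJ : J ∘ₗ J = -LinearMap.id) :
    J ∘ₗ K = LinearMap.id ↔ J = -K := by
  rw [← neg_inj, ← LinearMap.comp_neg, comp_eq_neg_id_iff_eq hJ]

theorem stmt1_general {V : Type*} [NormedAddCommGroup V] [InnerProductSpace ℝ V]
    (hdim : Module.finrank ℝ V = 4)
    (Jp Jm : V →ₗ[ℝ] V)
    (hJpsq : Jp ∘ₗ Jp = -LinearMap.id)
    (hJpg : ∀ x y : V, ⟪Jp x, Jp y⟫ = ⟪x, y⟫)
    (hJmg : ∀ x y : V, ⟪Jm x, Jm y⟫ = ⟪x, y⟫)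
    (p : ℝ) (hp : p = -(1/4) * LinearMap.trace ℝ V (Jp ∘ₗ Jm)) :
    |p| ≤ 1 ∧ (p = 1 ↔ Jp = Jm) ∧ (p = -1 ↔ Jp = -Jm) := by
  have : FiniteDimensional ℝ V := Module.finite_of_finrank_eq_succ hdim
  have hQ (x : V) : ‖(Jp ∘ₗ Jm) x‖ ≤ ‖x‖ :=
    (((Jp.isometryOfInner hJpg).norm_map (Jm x)).trans
      ((Jm.isometryOfInner hJmg).norm_map x)).le
  have hnegQ (x : V) : ‖(-(Jp ∘ₗ Jm)) x‖ ≤ ‖x‖ := by simpa using hQ x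
  have hbound := LinearMap.abs_trace_le_finrank_of_norm_map_le hQ
  have hneg := LinearMap.trace_eq_finrank_iff_of_norm_map_le hnegQ
  have hpos := LinearMap.trace_eq_finrank_iff_of_norm_map_le hQ
  rw [map_neg, neg_eq_iff_eq_neg (a := Jp ∘ₗ Jm), LinearMap.comp_eq_neg_id_iff_eq hJpsq] at hneg
  rw [LinearMap.comp_eq_id_iff_eq_neg hJpsq] at hpos
  rw [hdim, Nat.cast_ofNat] at hbound hneg hpos
  subst hp
  refine ⟨by rw [abs_le] at hbound ⊢; constructor <;> linarith, ?_, ?_⟩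
  · rw [← hneg]; constructor <;> intro h <;> linarith
  · rw [← hpos]; constructor <;> intro h <;> linarith

/-- For `g`-orthogonal complex structures `J₊, J₋` on a `4`-dimensional oriented inner
product space inducing the given orientation, the angle function
`p = -(1/4)·trace(J₊J₋)` satisfies `|p| ≤ 1`, with `p = 1` iff `J₊ = J₋` and
`p = -1` iff `J₊ = -J₋`. -/
theorem stmt1 {V : Type*} [NormedAddCommGroup V] [InnerProductSpace ℝ V]
    (hdim : Module.finrank ℝ V = 4) (o : Orientation ℝ V (Fin 4))
    (Jp Jm : V →ₗ[ℝ] V)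
    (hJpsq : Jp ∘ₗ Jp = -LinearMap.id) (hJmsq : Jm ∘ₗ Jm = -LinearMap.id)
    (hJpg : ∀ x y : V, ⟪Jp x, Jp y⟫ = ⟪x, y⟫)
    (hJmg : ∀ x y : V, ⟪Jm x, Jm y⟫ = ⟪x, y⟫)
    (hJpo : InducesOrientation o Jp) (hJmo : InducesOrientation o Jm)
    (p : ℝ) (hp : p = -(1/4) * LinearMap.trace ℝ V (Jp ∘ₗ Jm)) :
    |p| ≤ 1 ∧ (p = 1 ↔ Jp = Jm) ∧ (p = -1 ↔ Jp = -Jm) :=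
  stmt1_general hdim Jp Jm hJpsq hJpg hJmg p hp
end

section
/- With g-orthogonal complex structures J₊, J₋ on an oriented 4-dimensional inner product space and angle function p, the J₊-invariant part of the 2-form Ψ₋ equals (1-p²)·F₊, where F₊(·,·) = g(J₊·,·) and the J₊-invariant part of a 2-form β is (1/2)(β(·,·) + β(J₊·,J₊·)). -/
/-!
Both `J₊` and `J₋` have self-dual matrices in a positively oriented orthonormal basis. Such a
matrix `A` is skew with `A² = -1`, so the squares of its six upper entries sum to `2`; and its
Pfaffian is `1`, since the Pfaffian of `P A Pᵀ` is `det P` times that of `A` and `J` has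
Pfaffian `1` in a basis `(e, Je, f, Jf)`. Hence
`(A₀₁ - A₂₃)² + (A₀₂ + A₁₃)² + (A₀₃ - A₁₂)² = 2 - 2 = 0`, which is self-duality.
Self-dual matrices anticommute up to a scalar (they are the imaginary quaternions), so
`J₊J₋ + J₋J₊ = -2p`. With this relation `Ψ₋ = F₊ - p F₋`, and averaging over `J₊` is a short
computation.
-/

open scoped RealInnerProductSpace

open scoped Matrix

namespace Matrix

theorem apply_swap_of_transpose_eq_neg {n α : Type*} [Neg α] {A : Matrix n n α} (hA : Aᵀ = -A)
    (i j : n) : A j i = -A i j := by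
  simpa using congrFun (congrFun hA i) j

def pfaffianFinFour (A : Matrix (Fin 4) (Fin 4) ℝ) : ℝ :=
  A 0 1 * A 2 3 - A 0 2 * A 1 3 + A 0 3 * A 1 2

theorem pfaffianFinFour_mul_mul_transpose (P A : Matrix (Fin 4) (Fin 4) ℝ) (hA : Aᵀ = -A) :
    pfaffianFinFour (P * A * Pᵀ) = P.det * pfaffianFinFour A := by
  have skew := apply_swap_of_transpose_eq_neg hA
  have diag : ∀ i, A i i = 0 := fun i => by linarith [skew i i]
  simp only [pfaffianFinFour, mul_apply, transpose_apply,
    det_succ_row_zero, Fin.sum_univ_succ, submatrix_apply, det_unique]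
  simp [Fin.succAbove, Fin.lt_def, diag, skew 0 1, skew 0 2, skew 0 3, skew 1 2, skew 1 3, skew 2 3]
  ring

-- The matrices of the self-dual 2-forms `a (e⁰¹ + e²³) + b (e⁰² + e³¹) + c (e⁰³ + e¹²)`.
def selfDual (a b c : ℝ) : Matrix (Fin 4) (Fin 4) ℝ :=
  !![0, a, b, c; -a, 0, c, -b; -b, -c, 0, a; -c, b, -a, 0]

theorem selfDual_mul_add_mul_selfDual (a b c a' b' c' : ℝ) :
    selfDual a b c * selfDual a' b' c' + selfDual a' b' c' * selfDual a b c =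
      (-2 * (a * a' + b * b' + c * c')) • 1 := by
  ext i j
  fin_cases i <;> fin_cases j <;> simp [selfDual] <;> ring

theorem eq_selfDual_of_pfaffianFinFour_eq_one {A : Matrix (Fin 4) (Fin 4) ℝ} (hA : Aᵀ = -A)
    (hA2 : A * A = -1) (hpf : pfaffianFinFour A = 1) :
    A = selfDual (A 0 1) (A 0 2) (A 0 3) := by
  have skew := apply_swap_of_transpose_eq_neg hA
  have diag : ∀ i, A i i = 0 := fun i => by linarith [skew i i]
  have trace : ∑ i, (A * A) i i = -4 := by simp [hA2]
  simp only [mul_apply, Fin.sum_univ_four, diag, skew 0 1, skew 0 2, skew 0 3, skew 1 2,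
    skew 1 3, skew 2 3] at trace
  unfold pfaffianFinFour at hpf
  have sq_sum : (A 0 1 - A 2 3) ^ 2 + (A 0 2 + A 1 3) ^ 2 + (A 0 3 - A 1 2) ^ 2 = 0 := by
    linear_combination (-1/2) * trace - 2 * hpf
  obtain ⟨⟨h1, h2⟩, h3⟩ : (A 0 1 - A 2 3 = 0 ∧ A 0 2 + A 1 3 = 0) ∧ A 0 3 - A 1 2 = 0 := by
    simpa [add_eq_zero_iff_of_nonneg, add_nonneg, sq_nonneg] using sq_sum
  ext i j
  fin_cases i <;> fin_cases j <;> simp [selfDual, diag, skew 0 1, skew 0 2, skew 0 3, skew 1 2,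
    skew 1 3, skew 2 3, sub_eq_zero.mp h1, eq_neg_of_add_eq_zero_right h2, sub_eq_zero.mp h3]

end Matrix

theorem LinearMap.toMatrix_orthonormalBasis_apply {ι V : Type*} [Fintype ι] [DecidableEq ι]
    [NormedAddCommGroup V] [InnerProductSpace ℝ V] (b : OrthonormalBasis ι ℝ V) (f : V →ₗ[ℝ] V)
    (i j : ι) : LinearMap.toMatrix b.toBasis b.toBasis f i j = ⟪b i, f (b j)⟫ := by
  simp [LinearMap.toMatrix_apply, OrthonormalBasis.repr_apply_apply]

theorem LinearMap.toMatrix_orthonormalBasis_eq_mul_mul_transpose {ι V : Type*} [Fintype ι]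
    [DecidableEq ι] [NormedAddCommGroup V] [InnerProductSpace ℝ V] (b c : OrthonormalBasis ι ℝ V)
    (f : V →ₗ[ℝ] V) :
    LinearMap.toMatrix b.toBasis b.toBasis f =
      b.toBasis.toMatrix c * LinearMap.toMatrix c.toBasis c.toBasis f * (b.toBasis.toMatrix c)ᵀ := by
  have : c.toBasis.toMatrix b = (b.toBasis.toMatrix c)ᵀ := by
    ext i j
    simp [Module.Basis.toMatrix_apply, OrthonormalBasis.repr_apply_apply, real_inner_comm]
  rw [← this]
  simpa using (basis_toMatrix_mul_linearMap_toMatrix_mul_basis_toMatrix (b := b.toBasis)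
    (b' := c.toBasis) (c := b.toBasis) (c' := c.toBasis) f).symm

structure IsOrthogonalComplexStructure {V : Type*} [NormedAddCommGroup V] [InnerProductSpace ℝ V]
    (J : V →ₗ[ℝ] V) : Prop where
  comp_self : J ∘ₗ J = -LinearMap.id
  inner_map_map : ∀ x y, ⟪J x, J y⟫ = ⟪x, y⟫

namespace IsOrthogonalComplexStructure

variable {V : Type*} [NormedAddCommGroup V] [InnerProductSpace ℝ V] {J : V →ₗ[ℝ] V}

theorem apply_apply (hJ : IsOrthogonalComplexStructure J) (x : V) : J (J x) = -x := by
  simpa using LinearMap.congr_fun hJ.comp_self x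

theorem inner_apply_left (hJ : IsOrthogonalComplexStructure J) (x y : V) :
    ⟪J x, y⟫ = -⟪x, J y⟫ := by
  rw [← hJ.inner_map_map x (J y), hJ.apply_apply, inner_neg_right, neg_neg]

theorem toMatrix_transpose {ι : Type*} [Fintype ι] [DecidableEq ι]
    (hJ : IsOrthogonalComplexStructure J) (b : OrthonormalBasis ι ℝ V) :
    (LinearMap.toMatrix b.toBasis b.toBasis J)ᵀ = -LinearMap.toMatrix b.toBasis b.toBasis J := by
  ext i j
  simp [LinearMap.toMatrix_orthonormalBasis_apply, ← hJ.inner_apply_left, real_inner_comm]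

theorem toMatrix_mul_self {ι : Type*} [Fintype ι] [DecidableEq ι]
    (hJ : IsOrthogonalComplexStructure J) (b : OrthonormalBasis ι ℝ V) :
    LinearMap.toMatrix b.toBasis b.toBasis J * LinearMap.toMatrix b.toBasis b.toBasis J = -1 := by
  rw [← LinearMap.toMatrix_comp, hJ.comp_self, map_neg, LinearMap.toMatrix_id]

theorem pfaffianFinFour_toMatrix_of_adapted (hJ : IsOrthogonalComplexStructure J)
    (c : OrthonormalBasis (Fin 4) ℝ V) (h01 : J (c 0) = c 1) (h23 : J (c 2) = c 3) :
    (LinearMap.toMatrix c.toBasis c.toBasis J).pfaffianFinFour = 1 := by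
  have hc := orthonormal_iff_ite.mp c.orthonormal
  have h10 : J (c 1) = -c 0 := by rw [← h01, hJ.apply_apply]
  have h32 : J (c 3) = -c 2 := by rw [← h23, hJ.apply_apply]
  simp [Matrix.pfaffianFinFour, LinearMap.toMatrix_orthonormalBasis_apply, h23, h10, h32, hc]

theorem toMatrix_eq_selfDual {o : Orientation ℝ V (Fin 4)} (hJ : IsOrthogonalComplexStructure J)
    (hJo : InducesOrientation o J) (b : OrthonormalBasis (Fin 4) ℝ V)
    (hb : b.toBasis.orientation = o) :
    ∃ x y z : ℝ, LinearMap.toMatrix b.toBasis b.toBasis J = Matrix.selfDual x y z := by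
  obtain ⟨c, hc, h01, h23⟩ := hJo
  have hdet : b.toBasis.det c = 1 :=
    b.det_to_matrix_orthonormalBasis_of_same_orientation c (hb.trans hc.symm)
  refine ⟨_, _, _, Matrix.eq_selfDual_of_pfaffianFinFour_eq_one (hJ.toMatrix_transpose b)
    (hJ.toMatrix_mul_self b) ?_⟩
  rw [LinearMap.toMatrix_orthonormalBasis_eq_mul_mul_transpose b c,
    Matrix.pfaffianFinFour_mul_mul_transpose _ _ (hJ.toMatrix_transpose c),
    ← Module.Basis.det_apply, hdet, hJ.pfaffianFinFour_toMatrix_of_adapted c h01 h23, one_mul]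

theorem anticommutator_eq_smul_id {o : Orientation ℝ V (Fin 4)} {K : V →ₗ[ℝ] V}
    (hJ : IsOrthogonalComplexStructure J) (hK : IsOrthogonalComplexStructure K)
    (hJo : InducesOrientation o J) (hKo : InducesOrientation o K) :
    ∃ s : ℝ, J ∘ₗ K + K ∘ₗ J = s • LinearMap.id := by
  obtain ⟨b, hb, -⟩ := id hJo
  obtain ⟨x, y, z, hJb⟩ := hJ.toMatrix_eq_selfDual hJo b hb
  obtain ⟨x', y', z', hKb⟩ := hK.toMatrix_eq_selfDual hKo b hb
  refine ⟨-2 * (x * x' + y * y' + z * z'), (LinearMap.toMatrix b.toBasis b.toBasis).injective ?_⟩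
  simp only [map_add, LinearMap.toMatrix_comp b.toBasis b.toBasis b.toBasis, hJb, hKb,
    Matrix.selfDual_mul_add_mul_selfDual, map_smul, LinearMap.toMatrix_id]

theorem anticommutator_eq_half_trace_smul_id {o : Orientation ℝ V (Fin 4)} {K : V →ₗ[ℝ] V}
    (hJ : IsOrthogonalComplexStructure J) (hK : IsOrthogonalComplexStructure K)
    (hJo : InducesOrientation o J) (hKo : InducesOrientation o K) :
    J ∘ₗ K + K ∘ₗ J = ((1 / 2) * LinearMap.trace ℝ V (J ∘ₗ K)) • LinearMap.id := by
  obtain ⟨s, hs⟩ := hJ.anticommutator_eq_smul_id hK hJo hKo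
  obtain ⟨b, -⟩ := hJo
  have : FiniteDimensional ℝ V := b.toBasis.finiteDimensional_of_finite
  have htrace := congrArg (LinearMap.trace ℝ V) hs
  rw [map_add, LinearMap.trace_comp_comm' J K, map_smul, LinearMap.trace_id,
    Module.finrank_eq_card_basis b.toBasis] at htrace
  rw [hs]
  congr 1
  simp only [Fintype.card_fin, Nat.cast_ofNat, smul_eq_mul] at htrace
  linarith

theorem commutator_apply_apply {K : V →ₗ[ℝ] V} {p : ℝ}
    (hK : IsOrthogonalComplexStructure K) (hJK : J ∘ₗ K + K ∘ₗ J = (-2 * p) • LinearMap.id)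
    (x : V) : (J ∘ₗ K - K ∘ₗ J) (K x) = (2 * p) • K x - (2 : ℝ) • J x := by
  have h := LinearMap.congr_fun hJK (K x)
  simp only [LinearMap.add_apply, LinearMap.comp_apply, LinearMap.smul_apply, LinearMap.id_apply,
    hK.apply_apply, map_neg] at h
  simp only [LinearMap.sub_apply, LinearMap.comp_apply, hK.apply_apply, map_neg]
  linear_combination (norm := module) (-1 : ℝ) • h

theorem inner_apply_apply_eq_of_anticommutator {K : V →ₗ[ℝ] V} {p : ℝ}
    (hJ : IsOrthogonalComplexStructure J) (hJK : J ∘ₗ K + K ∘ₗ J = (-2 * p) • LinearMap.id)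
    (x y : V) : ⟪K (J x), J y⟫ = 2 * p * ⟪J x, y⟫ - ⟪K x, y⟫ := by
  have h := LinearMap.congr_fun hJK x
  simp only [LinearMap.add_apply, LinearMap.comp_apply, LinearMap.smul_apply,
    LinearMap.id_apply] at h
  rw [eq_sub_of_add_eq' h, inner_sub_left, real_inner_smul_left, hJ.inner_map_map,
    hJ.inner_apply_left x y]
  ring

end IsOrthogonalComplexStructure

theorem stmt5_general {V : Type*} [NormedAddCommGroup V] [InnerProductSpace ℝ V]
    (o : Orientation ℝ V (Fin 4))
    (Jp Jm : V →ₗ[ℝ] V)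
    (hJpsq : Jp ∘ₗ Jp = -LinearMap.id) (hJmsq : Jm ∘ₗ Jm = -LinearMap.id)
    (hJpg : ∀ x y : V, ⟪Jp x, Jp y⟫ = ⟪x, y⟫)
    (hJmg : ∀ x y : V, ⟪Jm x, Jm y⟫ = ⟪x, y⟫)
    (hJpo : InducesOrientation o Jp) (hJmo : InducesOrientation o Jm)
    (p : ℝ) (hp : p = -(1/4) * LinearMap.trace ℝ V (Jp ∘ₗ Jm))
    (Fp Φ Ψm : V → V → ℝ)
    (hFp : ∀ x y, Fp x y = ⟪Jp x, y⟫)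
    (hΦ : ∀ x y, Φ x y = (1/2) * ⟪(Jp ∘ₗ Jm - Jm ∘ₗ Jp) x, y⟫)
    (hΨm : ∀ x y, Ψm x y = -Φ (Jm x) y) :
    ∀ x y : V, (1/2) * (Ψm x y + Ψm (Jp x) (Jp y)) = (1 - p ^ 2) * Fp x y := by
  have hJp : IsOrthogonalComplexStructure Jp := ⟨hJpsq, hJpg⟩
  have hJm : IsOrthogonalComplexStructure Jm := ⟨hJmsq, hJmg⟩
  have hanti : Jp ∘ₗ Jm + Jm ∘ₗ Jp = (-2 * p) • LinearMap.id := by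
    rw [hJp.anticommutator_eq_half_trace_smul_id hJm hJpo hJmo, hp]
    ring_nf
  have hΨ : ∀ x y, Ψm x y = ⟪Jp x, y⟫ - p * ⟪Jm x, y⟫ := fun x y => by
    rw [hΨm, hΦ, hJm.commutator_apply_apply hanti, inner_sub_left, real_inner_smul_left,
      real_inner_smul_left]
    ring
  intro x y
  rw [hΨ, hΨ, hFp, hJp.inner_map_map, hJp.inner_apply_apply_eq_of_anticommutator hanti]
  ring

/-- The `J₊`-invariant part of the `2`-form `Ψ₋`, namely
`(1/2)(Ψ₋(·,·) + Ψ₋(J₊·,J₊·))`, equals `(1-p²)·F₊`. -/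
theorem stmt5 {V : Type*} [NormedAddCommGroup V] [InnerProductSpace ℝ V]
    (hdim : Module.finrank ℝ V = 4) (o : Orientation ℝ V (Fin 4))
    (Jp Jm : V →ₗ[ℝ] V)
    (hJpsq : Jp ∘ₗ Jp = -LinearMap.id) (hJmsq : Jm ∘ₗ Jm = -LinearMap.id)
    (hJpg : ∀ x y : V, ⟪Jp x, Jp y⟫ = ⟪x, y⟫)
    (hJmg : ∀ x y : V, ⟪Jm x, Jm y⟫ = ⟪x, y⟫)
    (hJpo : InducesOrientation o Jp) (hJmo : InducesOrientation o Jm)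
    (p : ℝ) (hp : p = -(1/4) * LinearMap.trace ℝ V (Jp ∘ₗ Jm))
    (Fp Φ Ψm : V → V → ℝ)
    (hFp : ∀ x y, Fp x y = ⟪Jp x, y⟫)
    (hΦ : ∀ x y, Φ x y = (1/2) * ⟪(Jp ∘ₗ Jm - Jm ∘ₗ Jp) x, y⟫)
    (hΨm : ∀ x y, Ψm x y = -Φ (Jm x) y) :
    ∀ x y : V, (1/2) * (Ψm x y + Ψm (Jp x) (Jp y)) = (1 - p ^ 2) * Fp x y :=
  stmt5_general o Jp Jm hJpsq hJmsq hJpg hJmg hJpo hJmo p hp Fp Φ Ψm hFp hΦ hΨm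
end

section
/- Let J₊, J₋ be g-orthogonal complex structures on a 4-dimensional inner product space. The commutator [J₊,J₋] vanishes if and only if J₊ = J₋ or J₊ = -J₋. -/
/-!
If `J₊` and `J₋` commute, then `J₊ J₋` is an orthogonal involution commuting with both, with
`J₋ = -J₊` on its `+1`-eigenspace and `J₋ = J₊` on its `-1`-eigenspace; these eigenspaces are
`J₊`-invariant and orthogonal. If both were nonzero, unit vectors `e`, `f` in them would give an
orthonormal basis `(e, J₊e, f, J₊f)` adapted to `J₊`, while `(e, J₋e, f, J₋f) = (e, -J₊e, f, J₊f)`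
is adapted to `J₋` and oppositely oriented. But two bases adapted to the same complex structure
are equally oriented: their change-of-basis matrix is complex linear, so its real determinant
is `|det_ℂ|² > 0`.
-/

open scoped RealInnerProductSpace

open Module

section Linear
variable {V : Type*} [AddCommGroup V] [Module ℝ V]

theorem Module.Basis.repr_apply_of_adapted {J : V →ₗ[ℝ] V} (hJ : J ∘ₗ J = -LinearMap.id)
    {b : Basis (Fin 4) ℝ V} (h0 : J (b 0) = b 1) (h2 : J (b 2) = b 3) (x : V) :
    b.repr (J x) = ![-b.repr x 1, b.repr x 0, -b.repr x 3, b.repr x 2] := by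
  have h1 : J (b 1) = -b 0 := by rw [← h0, ← LinearMap.comp_apply, hJ]; rfl
  have h3 : J (b 3) = -b 2 := by rw [← h2, ← LinearMap.comp_apply, hJ]; rfl
  have hx : J x = ∑ i, b.repr x i • J (b i) := by
    conv_lhs => rw [← b.sum_repr x]
    simp only [map_sum, map_smul]
  ext i
  rw [hx, Fin.sum_univ_four, h0, h1, h2, h3]
  fin_cases i <;> simp

theorem Module.Basis.det_apply_of_adapted {J : V →ₗ[ℝ] V} (hJ : J ∘ₗ J = -LinearMap.id)
    {b c : Basis (Fin 4) ℝ V} (hb0 : J (b 0) = b 1) (hb2 : J (b 2) = b 3)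
    (hc0 : J (c 0) = c 1) (hc2 : J (c 2) = c 3) :
    b.det c = (b.repr (c 0) 0 * b.repr (c 2) 2 - b.repr (c 0) 1 * b.repr (c 2) 3
        - b.repr (c 0) 2 * b.repr (c 2) 0 + b.repr (c 0) 3 * b.repr (c 2) 1) ^ 2
      + (b.repr (c 0) 0 * b.repr (c 2) 3 + b.repr (c 0) 1 * b.repr (c 2) 2
        - b.repr (c 0) 2 * b.repr (c 2) 1 - b.repr (c 0) 3 * b.repr (c 2) 0) ^ 2 := by
  rw [Basis.det_apply, Matrix.det_succ_row_zero]
  simp [Fin.sum_univ_succ, Matrix.det_fin_three, Fin.succAbove, Basis.toMatrix_apply, ← hc0, ← hc2,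
    b.repr_apply_of_adapted hJ hb0 hb2]
  ring

theorem Module.Basis.orientation_eq_of_adapted {J : V →ₗ[ℝ] V} (hJ : J ∘ₗ J = -LinearMap.id)
    {b c : Basis (Fin 4) ℝ V} (hb0 : J (b 0) = b 1) (hb2 : J (b 2) = b 3)
    (hc0 : J (c 0) = c 1) (hc2 : J (c 2) = c 3) :
    b.orientation = c.orientation := by
  rw [Basis.orientation_eq_iff_det_pos]
  refine lt_of_le_of_ne ?_ (b.isUnit_det c).ne_zero.symm
  rw [b.det_apply_of_adapted hJ hb0 hb2 hc0 hc2]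
  positivity

theorem LinearMap.exists_ne_zero_apply_eq_of_commute {Jp Jm : V →ₗ[ℝ] V}
    (hJp : Jp ∘ₗ Jp = -LinearMap.id) (hJm : Jm ∘ₗ Jm = -LinearMap.id)
    (hcomm : Jp ∘ₗ Jm = Jm ∘ₗ Jp) (hne : Jp ≠ -Jm) :
    ∃ u ≠ 0, Jm u = Jp u := by
  have hJp' (x : V) : Jp (Jp x) = -x := LinearMap.congr_fun hJp x
  have hJm' (x : V) : Jm (Jm x) = -x := LinearMap.congr_fun hJm x
  have hcomm' (x : V) : Jp (Jm x) = Jm (Jp x) := LinearMap.congr_fun hcomm x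
  obtain ⟨y, hy⟩ : ∃ y, Jp y ≠ -Jm y := by
    by_contra! h
    exact hne (LinearMap.ext h)
  -- `Jp ∘ Jm` is an involution and `u` is the component of `y` in its `-1`-eigenspace.
  refine ⟨y - Jp (Jm y), fun hu => hy ?_, ?_⟩
  · rw [sub_eq_zero] at hu
    simpa only [hJp'] using congrArg Jp hu
  · rw [map_sub, map_sub, hJp', ← hcomm', hJm', map_neg]
    abel

theorem LinearMap.exists_ne_zero_apply_eq_neg_of_commute {Jp Jm : V →ₗ[ℝ] V}
    (hJp : Jp ∘ₗ Jp = -LinearMap.id) (hJm : Jm ∘ₗ Jm = -LinearMap.id)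
    (hcomm : Jp ∘ₗ Jm = Jm ∘ₗ Jp) (hne : Jp ≠ Jm) :
    ∃ u ≠ 0, Jm u = -Jp u := by
  obtain ⟨u, hu, h⟩ := exists_ne_zero_apply_eq_of_commute (Jm := -Jm) hJp
    (by rw [LinearMap.neg_comp, LinearMap.comp_neg, neg_neg, hJm])
    (by rw [LinearMap.neg_comp, LinearMap.comp_neg, hcomm]) (by rwa [neg_neg])
  exact ⟨u, hu, by rw [← h, LinearMap.neg_apply, neg_neg]⟩

end Linear

section InnerProduct
variable {V : Type*} [NormedAddCommGroup V] [InnerProductSpace ℝ V]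

theorem inner_eq_zero_of_apply_eq_neg_of_apply_eq {Jp Jm : V →ₗ[ℝ] V}
    (hJpg : ∀ x y : V, ⟪Jp x, Jp y⟫ = ⟪x, y⟫) (hJmg : ∀ x y : V, ⟪Jm x, Jm y⟫ = ⟪x, y⟫)
    {e f : V} (he : Jm e = -Jp e) (hf : Jm f = Jp f) : ⟪e, f⟫ = 0 := by
  have := hJmg e f
  rw [he, hf, inner_neg_left, hJpg] at this
  linarith

theorem LinearMap.inner_apply_left_eq_neg {J : V →ₗ[ℝ] V} (hJ : J ∘ₗ J = -LinearMap.id)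
    (hJg : ∀ x y : V, ⟪J x, J y⟫ = ⟪x, y⟫) (x y : V) : ⟪J x, y⟫ = -⟪x, J y⟫ := by
  rw [← hJg, ← LinearMap.comp_apply, hJ, LinearMap.neg_apply, LinearMap.id_apply, inner_neg_left]

theorem LinearMap.inner_self_apply_eq_zero {J : V →ₗ[ℝ] V} (hJ : J ∘ₗ J = -LinearMap.id)
    (hJg : ∀ x y : V, ⟪J x, J y⟫ = ⟪x, y⟫) (x : V) : ⟪x, J x⟫ = 0 := by
  have := J.inner_apply_left_eq_neg hJ hJg x x
  rw [real_inner_comm x] at this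
  linarith

theorem LinearMap.orthonormal_adapted {J : V →ₗ[ℝ] V} (hJ : J ∘ₗ J = -LinearMap.id)
    (hJg : ∀ x y : V, ⟪J x, J y⟫ = ⟪x, y⟫) {e f : V} (he : ‖e‖ = 1) (hf : ‖f‖ = 1)
    (hef : ⟪e, f⟫ = 0) (heJf : ⟪e, J f⟫ = 0) : Orthonormal ℝ ![e, J e, f, J f] := by
  have hJe : ⟪J e, f⟫ = 0 := by rw [J.inner_apply_left_eq_neg hJ hJg, heJf, neg_zero]
  have hJn (x : V) : ‖J x‖ = ‖x‖ := by
    rw [norm_eq_sqrt_real_inner, hJg, ← norm_eq_sqrt_real_inner]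
  have hJ0 := J.inner_self_apply_eq_zero hJ hJg
  rw [orthonormal_iff_ite]
  intro i j
  fin_cases i <;> fin_cases j <;>
    simp [hJg, hJn, he, hf, hef, heJf, hJe, hJ0, real_inner_comm e, real_inner_comm f,
      real_inner_comm (J e)]

theorem InducesOrientation.basis_orientation_eq {o : Orientation ℝ V (Fin 4)} {J : V →ₗ[ℝ] V}
    (hJo : InducesOrientation o J) (hJ : J ∘ₗ J = -LinearMap.id) {c : Basis (Fin 4) ℝ V}
    (hc0 : J (c 0) = c 1) (hc2 : J (c 2) = c 3) : c.orientation = o := by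
  obtain ⟨b, rfl, hb0, hb2⟩ := hJo
  exact (b.toBasis.orientation_eq_of_adapted hJ (by simpa using hb0) (by simpa using hb2)
    hc0 hc2).symm

theorem LinearMap.eq_or_eq_neg_of_commute (hdim : finrank ℝ V = 4)
    {o : Orientation ℝ V (Fin 4)} {Jp Jm : V →ₗ[ℝ] V}
    (hJp : Jp ∘ₗ Jp = -LinearMap.id) (hJm : Jm ∘ₗ Jm = -LinearMap.id)
    (hJpg : ∀ x y : V, ⟪Jp x, Jp y⟫ = ⟪x, y⟫) (hJmg : ∀ x y : V, ⟪Jm x, Jm y⟫ = ⟪x, y⟫)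
    (hJpo : InducesOrientation o Jp) (hJmo : InducesOrientation o Jm)
    (hcomm : Jp ∘ₗ Jm = Jm ∘ₗ Jp) : Jp = Jm ∨ Jp = -Jm := by
  by_contra! ⟨hne, hne'⟩
  obtain ⟨e, he0, he⟩ := exists_ne_zero_apply_eq_neg_of_commute hJp hJm hcomm hne
  obtain ⟨f, hf0, hf⟩ := exists_ne_zero_apply_eq_of_commute hJp hJm hcomm hne'
  set e₁ := ‖e‖⁻¹ • e
  set f₁ := ‖f‖⁻¹ • f
  have he₁ : Jm e₁ = -Jp e₁ := by simp only [e₁, map_smul, he, smul_neg]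
  have hf₁ : Jm f₁ = Jp f₁ := by simp only [f₁, map_smul, hf]
  have hJf₁ : Jm (Jp f₁) = Jp (Jp f₁) := by
    rw [← LinearMap.comp_apply, ← hcomm, LinearMap.comp_apply, hf₁]
  have hon := Jp.orthonormal_adapted hJp hJpg (norm_smul_inv_norm he0) (norm_smul_inv_norm hf0)
    (inner_eq_zero_of_apply_eq_neg_of_apply_eq hJpg hJmg he₁ hf₁)
    (inner_eq_zero_of_apply_eq_neg_of_apply_eq hJpg hJmg he₁ hJf₁)
  set B := basisOfOrthonormalOfCardEqFinrank hon (by rw [Fintype.card_fin, hdim])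
  have hB : B.orientation = o := hJpo.basis_orientation_eq hJp (by simp [B]) (by simp [B])
  have hB' : (B.unitsSMul (Function.update 1 1 (-1))).orientation = o :=
    hJmo.basis_orientation_eq hJm (by simp [B, Basis.unitsSMul_apply, he])
      (by simp [B, Basis.unitsSMul_apply, hf])
  have := B.orientation_neg_single 1
  rw [hB, hB'] at this
  exact Module.Ray.ne_neg_self o this

end InnerProduct

/-- For `g`-orthogonal complex structures `J₊, J₋` on a `4`-dimensional inner product
space inducing the same orientation, the commutator `[J₊,J₋]` vanishes if and only if
`J₊ = J₋` or `J₊ = -J₋`. -/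
theorem stmt6 {V : Type*} [NormedAddCommGroup V] [InnerProductSpace ℝ V]
    (hdim : Module.finrank ℝ V = 4) (o : Orientation ℝ V (Fin 4))
    (Jp Jm : V →ₗ[ℝ] V)
    (hJpsq : Jp ∘ₗ Jp = -LinearMap.id) (hJmsq : Jm ∘ₗ Jm = -LinearMap.id)
    (hJpg : ∀ x y : V, ⟪Jp x, Jp y⟫ = ⟪x, y⟫)
    (hJmg : ∀ x y : V, ⟪Jm x, Jm y⟫ = ⟪x, y⟫)
    (hJpo : InducesOrientation o Jp) (hJmo : InducesOrientation o Jm) :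
    Jp ∘ₗ Jm - Jm ∘ₗ Jp = 0 ↔ (Jp = Jm ∨ Jp = -Jm) := by
  rw [sub_eq_zero]
  constructor
  · exact LinearMap.eq_or_eq_neg_of_commute hdim hJpsq hJmsq hJpg hJmg hJpo hJmo
  · rintro (rfl | rfl)
    · rfl
    · rw [LinearMap.neg_comp, LinearMap.comp_neg]
end
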